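/- arXiv:1801.07600 — 5 statements merged into one kernel-verified Lean document; each statement's English description precedes it below -/
import Mathlib

section
/- Let p and q be probability laws on the positive integers ℕ* with p(j) > 0 and q(j) > 0 for all j ≥ 1, and suppose q(j+1)·p(j) ≤ q(j)·p(j+1) for every j ≥ 1. Then the function g : ℕ* → ℝ₊ defined by g(j) = (Σ_{k≥j} q(k)) / (Σ_{k≥j} p(k)) is nonincreasing; in particular, since g(1) = 1, one gets g(j) ≤ 1 for all j ≥ 1. -/
/-- For positive probability laws `p, q` on `ℕ*` with
`q (j+1) * p j ≤ q j * p (j+1)` for all `j ≥ 1`, the ratio of tail sums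
`g j = (∑_{k ≥ j} q k) / (∑_{k ≥ j} p k)` is nonincreasing on `ℕ*`; since `g 1 = 1`,
one gets `g j ≤ 1` for all `j ≥ 1`. -/
theorem statement_2
    (p q : ℕ → ℝ)
    (hp_pos : ∀ j, 1 ≤ j → 0 < p j)
    (hp_le_one : ∀ j, 1 ≤ j → p j ≤ 1)
    (hp_summable : Summable fun j : ℕ => p (j + 1))
    (hp_sum : ∑' j : ℕ, p (j + 1) = 1)
    (hq_pos : ∀ j, 1 ≤ j → 0 < q j)
    (hq_le_one : ∀ j, 1 ≤ j → q j ≤ 1)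
    (hq_summable : Summable fun j : ℕ => q (j + 1))
    (hq_sum : ∑' j : ℕ, q (j + 1) = 1)
    (h : ∀ j, 1 ≤ j → q (j + 1) * p j ≤ q j * p (j + 1))
    (g : ℕ → ℝ)
    (hg : ∀ j, g j = (∑' k : ℕ, q (j + k)) / (∑' k : ℕ, p (j + k))) :
    (∀ j, 1 ≤ j → g (j + 1) ≤ g j) ∧ g 1 = 1 ∧ (∀ j, 1 ≤ j → g j ≤ 1) := by
  -- summability of tails
  have hpS : Summable p := (summable_nat_add_iff 1).mp hp_summable
  have hqS : Summable q := (summable_nat_add_iff 1).mp hq_summable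
  have hpT : ∀ j : ℕ, Summable fun k => p (j + k) := by
    intro j
    have := (summable_nat_add_iff j).mpr hpS
    exact this.congr (fun k => by rw [add_comm])
  have hqT : ∀ j : ℕ, Summable fun k => q (j + k) := by
    intro j
    have := (summable_nat_add_iff j).mpr hqS
    exact this.congr (fun k => by rw [add_comm])
  -- positivity of tail sums
  have hPpos : ∀ j : ℕ, 1 ≤ j → 0 < ∑' k : ℕ, p (j + k) := by
    intro j hj
    have h0 : p (j + 0) ≤ ∑' k : ℕ, p (j + k) :=
      Summable.le_tsum (hpT j) 0 (fun k _ => le_of_lt (hp_pos (j + k) (le_add_right hj)))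
    have := hp_pos j hj
    simpa using lt_of_lt_of_le (by simpa using this) h0
  have hQpos : ∀ j : ℕ, 1 ≤ j → 0 < ∑' k : ℕ, q (j + k) := by
    intro j hj
    have h0 : q (j + 0) ≤ ∑' k : ℕ, q (j + k) :=
      Summable.le_tsum (hqT j) 0 (fun k _ => le_of_lt (hq_pos (j + k) (le_add_right hj)))
    have := hq_pos j hj
    simpa using lt_of_lt_of_le (by simpa using this) h0
  -- likelihood ratio monotone: q (j + k) * p j ≤ q j * p (j + k)
  have hlr : ∀ j, 1 ≤ j → ∀ k : ℕ, q (j + k) * p j ≤ q j * p (j + k) := by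
    intro j hj k
    induction k with
    | zero => simp [mul_comm]
    | succ k ih =>
      have hjk : 1 ≤ j + k := le_add_right hj
      have h1 := h (j + k) hjk
      have hpk := hp_pos (j + k) hjk
      have hpk1 := hp_pos (j + k + 1) (le_add_right hjk)
      have hqj := hq_pos j hj
      have hpj := hp_pos j hj
      have hqk1 := hq_pos (j + k + 1) (le_add_right hjk)
      have key : q (j + (k + 1)) * p j * p (j + k) ≤ q j * p (j + (k + 1)) * p (j + k) := by
        have e : j + (k + 1) = j + k + 1 := by ring
        rw [e]
        nlinarith [mul_le_mul_of_nonneg_right h1 hpj.le,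
          mul_le_mul_of_nonneg_right ih hpk1.le]
      exact le_of_mul_le_mul_right key hpk
  -- tail sum inequality
  have hts : ∀ j, 1 ≤ j → (∑' k : ℕ, q (j + 1 + k)) * p j ≤ q j * ∑' k : ℕ, p (j + 1 + k) := by
    intro j hj
    rw [← tsum_mul_right, ← tsum_mul_left]
    refine Summable.tsum_le_tsum (fun k => ?_) ((hqT (j+1)).mul_right _) ((hpT (j+1)).mul_left _)
    have := hlr j hj (1 + k)
    simpa [add_assoc] using this
  -- tail recursion: Q j = q j + Q (j+1), P j = p j + P (j+1)
  have hQrec : ∀ j : ℕ, (∑' k : ℕ, q (j + k)) = q j + ∑' k : ℕ, q (j + 1 + k) := by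
    intro j
    have := Summable.tsum_eq_zero_add (hqT j)
    simpa [add_assoc, add_comm, add_left_comm] using this
  have hPrec : ∀ j : ℕ, (∑' k : ℕ, p (j + k)) = p j + ∑' k : ℕ, p (j + 1 + k) := by
    intro j
    have := Summable.tsum_eq_zero_add (hpT j)
    simpa [add_assoc, add_comm, add_left_comm] using this
  have hmono : ∀ j, 1 ≤ j → g (j + 1) ≤ g j := by
    intro j hj
    rw [hg, hg]
    rw [div_le_div_iff₀ (hPpos (j+1) (le_add_right hj)) (hPpos j hj)]
    rw [hQrec j, hPrec j]
    have h1 := hts j hj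
    have h2 : (0:ℝ) ≤ ∑' k : ℕ, q (j + 1 + k) := (hQpos (j+1) (le_add_right hj)).le
    nlinarith
  have hg1 : g 1 = 1 := by
    rw [hg]
    have e1 : (∑' k : ℕ, q (1 + k)) = 1 := by
      rw [← hq_sum]; exact tsum_congr fun k => by rw [add_comm]
    have e2 : (∑' k : ℕ, p (1 + k)) = 1 := by
      rw [← hp_sum]; exact tsum_congr fun k => by rw [add_comm]
    rw [e1, e2]; norm_num
  refine ⟨hmono, hg1, ?_⟩
  intro j hj
  induction j with
  | zero => omega
  | succ n ih =>
    rcases Nat.eq_or_lt_of_le hj with h1 | h1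
    · have hn0 : n = 0 := by omega
      subst hn0
      exact le_of_eq hg1
    · have hn : 1 ≤ n := by omega
      exact le_trans (hmono n hn) (ih hn)
end

section
/- Let λ > 0 and let q be a probability law on the positive integers ℕ* satisfying i·q(i) ≤ λ·q(i−1) for every i ≥ 2. Then q is dominated by the positive-conditioned Poisson law Poi⁺_λ, i.e. for every j ≥ 1, Σ_{k≥j} q(k) ≤ Σ_{k≥j} Poi⁺_λ(k). -/
/-
The ratio `q k / Poi⁺_λ(k)` is nonincreasing, because `Poi⁺_λ` satisfies the hypothesis with
equality: `k · Poi⁺_λ(k) = λ · Poi⁺_λ(k-1)`. Two probability laws whose likelihood ratio is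
nonincreasing cross only once: with `c = q j / Poi⁺_λ(j)`, `q ≤ c · Poi⁺_λ` beyond `j` and
`q ≥ c · Poi⁺_λ` before `j`. If `c ≤ 1` the first inequality bounds the tail of `q` directly;
if `c ≥ 1` the second shows that `q` has at least as much mass before `j`, hence at most as
much from `j` on.
-/

open Real

/-- The positive-conditioned Poisson law on `ℕ* = {1, 2, ...}`:
`Poi⁺_λ(n) = e^{-λ} λ^n / (n! (1 - e^{-λ}))`. -/
noncomputable def poiPlus (lam : ℝ) (n : ℕ) : ℝ :=
  Real.exp (-lam) * lam ^ n / (n.factorial * (1 - Real.exp (-lam)))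

open Finset

theorem tsum_tail_le_of_antitone_div {p q : ℕ → ℝ} (hp : ∀ n, 0 < p n) (hps : Summable p)
    (hqs : Summable q) (htot : ∑' n, q n ≤ ∑' n, p n) (hanti : Antitone fun n ↦ q n / p n)
    (j : ℕ) : ∑' k, q (k + j) ≤ ∑' k, p (k + j) := by
  set c := q j / p j
  have upper (k : ℕ) : q (k + j) ≤ c * p (k + j) :=
    (div_le_iff₀ (hp _)).1 (hanti (Nat.le_add_left j k))
  have lower (i : ℕ) (hi : i < j) : c * p i ≤ q i := (le_div_iff₀ (hp i)).1 (hanti hi.le)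
  rcases le_total c 1 with hc | hc
  · calc ∑' k, q (k + j) ≤ ∑' k, c * p (k + j) :=
          Summable.tsum_le_tsum upper ((summable_nat_add_iff j).2 hqs)
            (((summable_nat_add_iff j).2 hps).mul_left c)
      _ = c * ∑' k, p (k + j) := tsum_mul_left
      _ ≤ ∑' k, p (k + j) := mul_le_of_le_one_left (tsum_nonneg fun k ↦ (hp _).le) hc
  · have head : ∑ i ∈ range j, p i ≤ ∑ i ∈ range j, q i := sum_le_sum fun i hi ↦
      (le_mul_of_one_le_left (hp i).le hc).trans (lower i (mem_range.1 hi))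
    linarith [hps.sum_add_tsum_nat_add j, hqs.sum_add_tsum_nat_add j]

section PoiPlus

variable {lam : ℝ}

theorem one_sub_exp_neg_pos (hlam : 0 < lam) : 0 < 1 - exp (-lam) :=
  sub_pos.2 (exp_lt_one_iff.2 (neg_neg_of_pos hlam))

theorem poiPlus_pos (hlam : 0 < lam) (n : ℕ) : 0 < poiPlus lam n := by
  have := one_sub_exp_neg_pos hlam
  unfold poiPlus
  positivity

theorem poiPlus_eq_mul (lam : ℝ) (n : ℕ) :
    poiPlus lam n = exp (-lam) / (1 - exp (-lam)) * (lam ^ n / n.factorial) := by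
  rw [poiPlus, div_mul_div_comm, mul_comm (1 - exp (-lam))]

theorem succ_mul_poiPlus_succ (lam : ℝ) (n : ℕ) :
    ((n : ℝ) + 1) * poiPlus lam (n + 1) = lam * poiPlus lam n := by
  rw [poiPlus_eq_mul, poiPlus_eq_mul, Nat.factorial_succ]
  push_cast
  field_simp
  ring

theorem hasSum_poiPlus_succ (hlam : 0 < lam) : HasSum (fun n ↦ poiPlus lam (n + 1)) 1 := by
  have hexp : HasSum (fun n ↦ lam ^ (n + 1) / (n + 1).factorial) (exp lam - 1) := by
    simpa [exp_eq_exp_ℝ] using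
      (hasSum_nat_add_iff' 1).2 (NormedSpace.expSeries_div_hasSum_exp lam)
  have hC : exp (-lam) / (1 - exp (-lam)) * (exp lam - 1) = 1 := by
    rw [div_mul_eq_mul_div, div_eq_one_iff_eq (one_sub_exp_neg_pos hlam).ne', mul_sub,
      ← exp_add, neg_add_cancel, exp_zero, mul_one]
  simpa only [← poiPlus_eq_mul, hC] using hexp.mul_left (exp (-lam) / (1 - exp (-lam)))

theorem div_poiPlus_succ_le (hlam : 0 < lam) {n : ℕ} {x y : ℝ}
    (h : ((n : ℝ) + 1) * x ≤ lam * y) : x / poiPlus lam (n + 1) ≤ y / poiPlus lam n := by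
  rw [div_le_div_iff₀ (poiPlus_pos hlam _) (poiPlus_pos hlam _)]
  refine le_of_mul_le_mul_left ?_ hlam
  calc lam * (x * poiPlus lam n) = ((n + 1) * x) * poiPlus lam (n + 1) := by
        linear_combination x * (succ_mul_poiPlus_succ lam n).symm
    _ ≤ lam * y * poiPlus lam (n + 1) :=
        mul_le_mul_of_nonneg_right h (poiPlus_pos hlam _).le
    _ = lam * (y * poiPlus lam (n + 1)) := mul_assoc _ _ _

end PoiPlus

theorem statement_3_general
    (lam : ℝ) (hlam : 0 < lam)
    (q : ℕ → ℝ)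
    (hq_summable : Summable fun j : ℕ => q (j + 1))
    (hq_sum : ∑' j : ℕ, q (j + 1) = 1)
    (h : ∀ i : ℕ, 2 ≤ i → (i : ℝ) * q i ≤ lam * q (i - 1)) :
    ∀ j, 1 ≤ j → ∑' k : ℕ, q (j + k) ≤ ∑' k : ℕ, poiPlus lam (j + k) := by
  intro j hj
  obtain ⟨i, rfl⟩ := Nat.exists_eq_add_of_le' hj
  have hanti : Antitone fun n ↦ q (n + 1) / poiPlus lam (n + 1) :=
    antitone_nat_of_succ_le fun n ↦ div_poiPlus_succ_le hlam (by
      simpa [add_assoc, one_add_one_eq_two] using h (n + 2) (by omega))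
  have hpoi := hasSum_poiPlus_succ hlam
  have tail := tsum_tail_le_of_antitone_div (fun n ↦ poiPlus_pos hlam _) hpoi.summable
    hq_summable (by rw [hq_sum, hpoi.tsum_eq]) hanti i
  convert tail using 4 <;> omega

/-- If a probability law `q` on `ℕ*` satisfies `i * q i ≤ λ * q (i-1)`
for all `i ≥ 2`, then `q` is dominated by the positive-conditioned Poisson law `Poi⁺_λ`. -/
theorem statement_3
    (lam : ℝ) (hlam : 0 < lam)
    (q : ℕ → ℝ)
    (hq_nonneg : ∀ j, 1 ≤ j → 0 ≤ q j)
    (hq_le_one : ∀ j, 1 ≤ j → q j ≤ 1)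
    (hq_summable : Summable fun j : ℕ => q (j + 1))
    (hq_sum : ∑' j : ℕ, q (j + 1) = 1)
    (h : ∀ i : ℕ, 2 ≤ i → (i : ℝ) * q i ≤ lam * q (i - 1)) :
    ∀ j, 1 ≤ j → ∑' k : ℕ, q (j + k) ≤ ∑' k : ℕ, poiPlus lam (j + k) :=
  statement_3_general lam hlam q hq_summable hq_sum h
end

section
/- For every α > 1 there exists a finite constant K such that the Cauchy-type density f_α satisfies (f_α * f_α)(x) ≤ K · f_α(x) for every x ∈ ℝ. -/
/-!
With `w(y) = (1 + |y|^α)⁻¹`, the triangle inequality and `(a + b)^α ≤ 2^α (a^α + b^α)` give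
`1 + |x|^α ≤ 2^α ((1 + |y|^α) + (1 + |x - y|^α))`, i.e. `w(y) w(x - y) ≤ 2^α w(x) (w(y) + w(x - y))`.
Integrating in `y` and using translation invariance yields `w * w ≤ 2^(α+1) ‖w‖₁ w`, and since
`f_α = w / ‖w‖₁` this is `f_α * f_α ≤ 2^(α+1) f_α`.
-/

open Real MeasureTheory

/-- The Cauchy-type probability density `f_α(y) = r_α / (1 + |y|^α)` on `ℝ`, where
`r_α = (∫ dy/(1+|y|^α))⁻¹` is the normalizing constant. -/
noncomputable def cauchyType (α : ℝ) (y : ℝ) : ℝ :=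
  (∫ z : ℝ, (1 + |z| ^ α)⁻¹)⁻¹ * (1 + |y| ^ α)⁻¹

theorem Real.add_rpow_le_two_rpow_mul_rpow_add_rpow {a b p : ℝ} (ha : 0 ≤ a) (hb : 0 ≤ b)
    (hp : 0 ≤ p) : (a + b) ^ p ≤ 2 ^ p * (a ^ p + b ^ p) := calc
  (a + b) ^ p ≤ (2 * max a b) ^ p := by
    rw [two_mul]; gcongr <;> simp
  _ = 2 ^ p * max a b ^ p := mul_rpow zero_le_two (le_max_of_le_left ha)
  _ ≤ 2 ^ p * (a ^ p + b ^ p) := by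
    gcongr
    rcases max_cases a b with ⟨h, -⟩ | ⟨h, -⟩ <;> rw [h] <;> simp [rpow_nonneg, ha, hb]

section ConvolutionBound

variable {G : Type*} [AddGroup G] [MeasurableSpace G] [MeasurableAdd G] [MeasurableNeg G]
  {μ : Measure G} [μ.IsAddLeftInvariant] [μ.IsNegInvariant]

theorem integral_mul_comp_sub_le_of_mul_le {w : G → ℝ} (hw : Integrable w μ) (hw0 : 0 ≤ w)
    {C : ℝ} {x : G} (hmul : ∀ y, w y * w (x - y) ≤ C * w x * (w y + w (x - y))) :
    ∫ y, w y * w (x - y) ∂μ ≤ 2 * C * (∫ y, w y ∂μ) * w x := by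
  have hwx : Integrable (fun y ↦ w (x - y)) μ := hw.comp_sub_left x
  calc ∫ y, w y * w (x - y) ∂μ ≤ ∫ y, C * w x * (w y + w (x - y)) ∂μ :=
        integral_mono_of_nonneg (.of_forall fun y ↦ mul_nonneg (hw0 y) (hw0 _))
          ((hw.add hwx).const_mul _) (.of_forall hmul)
    _ = 2 * C * (∫ y, w y ∂μ) * w x := by
        rw [integral_const_mul, integral_add hw hwx, integral_sub_left_eq_self]; ring

end ConvolutionBound

section CauchyWeight

variable {E : Type*} [NormedAddCommGroup E]

noncomputable def cauchyWeight (α : ℝ) (x : E) : ℝ := (1 + ‖x‖ ^ α)⁻¹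

theorem one_add_norm_rpow_pos (α : ℝ) (x : E) : 0 < 1 + ‖x‖ ^ α := by positivity

theorem cauchyWeight_nonneg (α : ℝ) : 0 ≤ cauchyWeight (E := E) α :=
  fun x ↦ (inv_pos.2 (one_add_norm_rpow_pos α x)).le

theorem one_add_norm_add_rpow_le {α : ℝ} (hα : 0 ≤ α) (x y : E) :
    1 + ‖x + y‖ ^ α ≤ 2 ^ α * ((1 + ‖x‖ ^ α) + (1 + ‖y‖ ^ α)) := by
  have h2 : 1 ≤ (2 : ℝ) ^ α := one_le_rpow one_le_two hα
  have hxy : ‖x + y‖ ^ α ≤ 2 ^ α * (‖x‖ ^ α + ‖y‖ ^ α) :=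
    (rpow_le_rpow (norm_nonneg _) (norm_add_le x y) hα).trans
      (add_rpow_le_two_rpow_mul_rpow_add_rpow (norm_nonneg x) (norm_nonneg y) hα)
  nlinarith

theorem cauchyWeight_mul_le {α : ℝ} (hα : 0 ≤ α) (x y : E) :
    cauchyWeight α x * cauchyWeight α y
      ≤ 2 ^ α * cauchyWeight α (x + y) * (cauchyWeight α x + cauchyWeight α y) := by
  have hx := one_add_norm_rpow_pos α x
  have hy := one_add_norm_rpow_pos α y
  unfold cauchyWeight
  rw [inv_add_inv hx.ne' hy.ne']
  field_simp
  exact one_add_norm_add_rpow_le hα x y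

variable [NormedSpace ℝ E] [FiniteDimensional ℝ E] [MeasurableSpace E] [BorelSpace E]
  {μ : Measure E} [μ.IsAddHaarMeasure]

theorem integrable_cauchyWeight {α : ℝ} (hα : (Module.finrank ℝ E : ℝ) < α) :
    Integrable (cauchyWeight α) μ := by
  have hα0 : 0 ≤ α := (Nat.cast_nonneg _).trans hα.le
  refine ((integrable_one_add_norm hα).const_mul (2 ^ α)).mono'
    (Measurable.aestronglyMeasurable (by unfold cauchyWeight; fun_prop))
    (.of_forall fun x ↦ ?_)
  have hpos : 0 < (1 + ‖x‖) ^ α := by positivity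
  have hle : (1 + ‖x‖) ^ α ≤ 2 ^ α * (1 + ‖x‖ ^ α) := by
    simpa using add_rpow_le_two_rpow_mul_rpow_add_rpow zero_le_one (norm_nonneg x) hα0
  rw [norm_of_nonneg (cauchyWeight_nonneg α x), rpow_neg (by positivity), cauchyWeight,
    ← div_eq_mul_inv, le_div_iff₀ hpos, inv_mul_le_iff₀ (one_add_norm_rpow_pos α x)]
  linarith

theorem integral_cauchyWeight_mul_le {α : ℝ} (hα : (Module.finrank ℝ E : ℝ) < α) (x : E) :
    ∫ y, cauchyWeight α y * cauchyWeight α (x - y) ∂μ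
      ≤ 2 * 2 ^ α * (∫ y, cauchyWeight α y ∂μ) * cauchyWeight α x :=
  integral_mul_comp_sub_le_of_mul_le (integrable_cauchyWeight hα) (cauchyWeight_nonneg α)
    fun y ↦ by
      simpa using cauchyWeight_mul_le ((Nat.cast_nonneg _).trans hα.le) y (x - y)

end CauchyWeight

theorem cauchyType_eq (α : ℝ) :
    cauchyType α = fun y ↦ (∫ z : ℝ, cauchyWeight α z)⁻¹ * cauchyWeight α y := by
  funext y
  simp only [cauchyType, cauchyWeight, Real.norm_eq_abs]

/-- For every `α > 1` there is a finite constant `K` with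
`(f_α * f_α)(x) ≤ K · f_α(x)` for all `x ∈ ℝ`. -/
theorem statement_10 (α : ℝ) (hα : 1 < α) :
    ∃ K : ℝ, ∀ x : ℝ,
      (∫ y : ℝ, cauchyType α y * cauchyType α (x - y)) ≤ K * cauchyType α x := by
  refine ⟨2 * 2 ^ α, fun x ↦ ?_⟩
  set c := ∫ z : ℝ, cauchyWeight α z
  have hdim : (Module.finrank ℝ ℝ : ℝ) < α := by simpa using hα
  rw [cauchyType_eq]
  calc ∫ y, c⁻¹ * cauchyWeight α y * (c⁻¹ * cauchyWeight α (x - y))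
      = c⁻¹ ^ 2 * ∫ y, cauchyWeight α y * cauchyWeight α (x - y) := by
        rw [← integral_const_mul]; congr 1 with y; ring
    _ ≤ c⁻¹ ^ 2 * (2 * 2 ^ α * c * cauchyWeight α x) :=
        mul_le_mul_of_nonneg_left (integral_cauchyWeight_mul_le hdim x) (sq_nonneg _)
    _ = 2 * 2 ^ α * (c⁻¹ * cauchyWeight α x) := by
        -- also true for `c = 0`, where `c⁻¹ = 0`
        have hc : c⁻¹ ^ 2 * c = c⁻¹ := by simpa [sq] using mul_self_mul_inv c⁻¹
        linear_combination (2 * 2 ^ α * cauchyWeight α x) * hc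
end

section
/- For every α > 1 and every x ∈ ℝ with |x| ≥ 1, one has ∫_ℝ (1+|x|^α) / ((1+|y+x/2|^α)(1+|y−x/2|^α)) dy ≥ 2 ∫_0^{1/2} dz/(1+z^α), and the right-hand side is a strictly positive constant independent of x. -/
open Real MeasureTheory intervalIntegral

lemma st12_aux_pow (α : ℝ) (hα : 0 ≤ α) {u : ℝ} (hu : 0 ≤ u) :
    (1 + u) ^ α ≤ 2 ^ α * (1 + u ^ α) := by
  have hmax : (0:ℝ) ≤ max 1 u := le_trans zero_le_one (le_max_left 1 u)
  have h1 : (1 + u) ≤ 2 * max 1 u := by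
    rcases le_total u 1 with h | h
    · rw [max_eq_left h]; linarith
    · rw [max_eq_right h]; linarith
  have h2 : (1 + u) ^ α ≤ (2 * max 1 u) ^ α :=
    Real.rpow_le_rpow (by linarith) h1 hα
  have h3 : (2 * max 1 u) ^ α = 2 ^ α * (max 1 u) ^ α :=
    Real.mul_rpow (by norm_num) hmax
  have h4 : (max 1 u) ^ α ≤ 1 + u ^ α := by
    rcases le_total u 1 with h | h
    · rw [max_eq_left h, Real.one_rpow]
      have := Real.rpow_nonneg hu α
      linarith
    · rw [max_eq_right h]
      linarith
  have h5 : (0:ℝ) < 2 ^ α := Real.rpow_pos_of_pos two_pos α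
  calc (1 + u) ^ α ≤ (2 * max 1 u) ^ α := h2
    _ = 2 ^ α * (max 1 u) ^ α := h3
    _ ≤ 2 ^ α * (1 + u ^ α) := by nlinarith

lemma st12_cont (α : ℝ) (hα : 0 ≤ α) : Continuous (fun z : ℝ => (1 + |z| ^ α)⁻¹) := by
  refine Continuous.inv₀ (continuous_const.add
    (continuous_abs.rpow_const fun x => Or.inr hα)) (fun x => ?_)
  positivity

lemma st12_integrable (α : ℝ) (hα : 1 < α) :
    Integrable (fun z : ℝ => (1 + |z| ^ α)⁻¹) := by
  have hα0 : (0:ℝ) < α := lt_trans one_pos hα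
  have hmaj : Integrable (fun z : ℝ => 2 ^ α * (1 + ‖z‖) ^ (-α)) := by
    refine (integrable_one_add_norm ?_).const_mul _
    simpa using hα
  refine hmaj.mono' ((st12_cont α hα0.le).aestronglyMeasurable) ?_
  filter_upwards with z
  have hz : (0:ℝ) ≤ |z| := abs_nonneg z
  have h1 : (0:ℝ) < 1 + |z| ^ α := by positivity
  have hp : (0:ℝ) < (1 + |z|) ^ α := Real.rpow_pos_of_pos (by linarith) α
  rw [Real.norm_eq_abs, abs_of_nonneg (by positivity : (0:ℝ) ≤ (1 + |z| ^ α)⁻¹),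
    Real.norm_eq_abs, Real.rpow_neg (by linarith), ← div_eq_mul_inv, le_div_iff₀ hp,
    inv_mul_le_iff₀ h1]
  have := st12_aux_pow α hα0.le hz
  nlinarith

/-- For `α > 1` and `|x| ≥ 1`,
`∫_ℝ (1+|x|^α) / ((1+|y+x/2|^α)(1+|y−x/2|^α)) dy ≥ 2 ∫_0^{1/2} dz/(1+z^α)`,
and the right-hand side is a strictly positive constant (independent of `x`). -/
theorem statement_12 (α : ℝ) (hα : 1 < α) (x : ℝ) (hx : 1 ≤ |x|) :
    2 * ∫ z in (0 : ℝ)..(1 / 2), (1 + z ^ α)⁻¹ ≤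
      (∫ y : ℝ, (1 + |x| ^ α) / ((1 + |y + x / 2| ^ α) * (1 + |y - x / 2| ^ α))) ∧
    0 < 2 * ∫ z in (0 : ℝ)..(1 / 2), (1 + z ^ α)⁻¹ := by
  have hα0 : (0:ℝ) < α := lt_trans one_pos hα
  set t : ℝ := |x| with htdef
  have ht : 1 ≤ t := hx
  have ht0 : 0 < t := lt_of_lt_of_le one_pos ht
  -- the interval integral with |z| instead of z
  have hc_eq : (∫ z in (0:ℝ)..(1/2), (1 + z ^ α)⁻¹)
      = ∫ z in (0:ℝ)..(1/2), (1 + |z| ^ α)⁻¹ := by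
    refine intervalIntegral.integral_congr fun z hz => ?_
    rw [Set.uIcc_of_le (by norm_num)] at hz
    rw [abs_of_nonneg hz.1]
  -- positivity of the constant
  have hcpos : 0 < ∫ z in (0:ℝ)..(1/2), (1 + z ^ α)⁻¹ := by
    rw [hc_eq]
    refine intervalIntegral.intervalIntegral_pos_of_pos_on
      ((st12_cont α hα0.le).intervalIntegrable _ _) (fun z hz => ?_) (by norm_num)
    positivity
  -- the integrand depends only on |x|
  set f : ℝ → ℝ := fun y => (1 + t ^ α) / ((1 + |y + t / 2| ^ α) * (1 + |y - t / 2| ^ α))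
    with hfdef
  have hrw : (fun y : ℝ => (1 + |x| ^ α) / ((1 + |y + x / 2| ^ α) * (1 + |y - x / 2| ^ α)))
      = f := by
    funext y
    rcases le_or_gt 0 x with hx0 | hx0
    · simp only [hfdef, htdef, abs_of_nonneg hx0]
    · have h1 : |x| = -x := abs_of_neg hx0
      simp only [hfdef, htdef, h1]
      rw [show y + -x / 2 = y - x / 2 from by ring, show y - -x / 2 = y + x / 2 from by ring,
        mul_comm (1 + |y - x / 2| ^ α)]
  have hf0 : ∀ y, 0 ≤ f y := by
    intro y
    have h1 : (0:ℝ) ≤ |y + t / 2| ^ α := Real.rpow_nonneg (abs_nonneg _) α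
    have h2 : (0:ℝ) ≤ |y - t / 2| ^ α := Real.rpow_nonneg (abs_nonneg _) α
    have h3 : (0:ℝ) ≤ t ^ α := Real.rpow_nonneg ht0.le α
    have : (0:ℝ) < (1 + |y + t / 2| ^ α) * (1 + |y - t / 2| ^ α) := by nlinarith
    positivity
  -- continuity of f
  have hc1 : Continuous fun y : ℝ => 1 + |y + t / 2| ^ α :=
    continuous_const.add (((continuous_id.add continuous_const).abs).rpow_const
      fun _ => Or.inr hα0.le)
  have hc2 : Continuous fun y : ℝ => 1 + |y - t / 2| ^ α :=
    continuous_const.add (((continuous_id.sub continuous_const).abs).rpow_const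
      fun _ => Or.inr hα0.le)
  have hdenpos : ∀ y : ℝ, (0:ℝ) < (1 + |y + t / 2| ^ α) * (1 + |y - t / 2| ^ α) := by
    intro y
    have h1 : (0:ℝ) ≤ |y + t / 2| ^ α := Real.rpow_nonneg (abs_nonneg _) α
    have h2 : (0:ℝ) ≤ |y - t / 2| ^ α := Real.rpow_nonneg (abs_nonneg _) α
    nlinarith
  have hfc : Continuous f :=
    continuous_const.div (hc1.mul hc2) fun y => (hdenpos y).ne'
  -- integrability of f
  have hfi : Integrable f := by
    have hg : Integrable (fun y : ℝ => (1 + t ^ α) * (1 + |y - t / 2| ^ α)⁻¹) :=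
      ((st12_integrable α hα).comp_sub_right (t / 2)).const_mul _
    refine hg.mono' hfc.aestronglyMeasurable ?_
    filter_upwards with y
    rw [Real.norm_eq_abs, abs_of_nonneg (hf0 y)]
    have h1 : (0:ℝ) ≤ |y + t / 2| ^ α := Real.rpow_nonneg (abs_nonneg _) α
    have h2 : (0:ℝ) < 1 + |y - t / 2| ^ α := by positivity
    have h3 : (0:ℝ) ≤ 1 + t ^ α := by positivity
    rw [hfdef]
    dsimp only
    rw [div_le_iff₀ (hdenpos y)]
    calc (1 + t ^ α) = (1 + t ^ α) * (1 + |y - t / 2| ^ α)⁻¹ * (1 + |y - t / 2| ^ α) := by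
          field_simp
      _ ≤ (1 + t ^ α) * (1 + |y - t / 2| ^ α)⁻¹ *
          ((1 + |y + t / 2| ^ α) * (1 + |y - t / 2| ^ α)) := by
          have h4 : (0:ℝ) ≤ (1 + t ^ α) * (1 + |y - t / 2| ^ α)⁻¹ := by positivity
          nlinarith [mul_nonneg h4 (mul_nonneg h1 h2.le)]
  -- first interval : [t/2 - 1/2, t/2]
  have hab1 : t / 2 - 1 / 2 ≤ t / 2 := by linarith
  have hlow1 : (∫ z in (0:ℝ)..(1/2), (1 + |z| ^ α)⁻¹)
      ≤ ∫ y in (t/2 - 1/2)..(t/2), f y := by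
    have hle : ∀ y ∈ Set.Icc (t/2 - 1/2) (t/2), (1 + |t/2 - y| ^ α)⁻¹ ≤ f y := by
      intro y hy
      have hy1 := hy.1
      have hy2 := hy.2
      have hB : |y + t / 2| ≤ t := by
        rw [abs_of_nonneg (by linarith : (0:ℝ) ≤ y + t / 2)]; linarith
      have hBα : |y + t / 2| ^ α ≤ t ^ α :=
        Real.rpow_le_rpow (abs_nonneg _) hB hα0.le
      have hDpos : (0:ℝ) < 1 + |y - t / 2| ^ α := by
        have := Real.rpow_nonneg (abs_nonneg (y - t / 2)) α; linarith
      have hBpos : (0:ℝ) < 1 + |y + t / 2| ^ α := by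
        have := Real.rpow_nonneg (abs_nonneg (y + t / 2)) α; linarith
      rw [show |t / 2 - y| = |y - t / 2| from abs_sub_comm _ _]
      rw [hfdef]
      dsimp only
      calc (1 + |y - t / 2| ^ α)⁻¹
          = 1 * (1 + |y - t / 2| ^ α)⁻¹ := (one_mul _).symm
        _ ≤ ((1 + t ^ α) / (1 + |y + t / 2| ^ α)) * (1 + |y - t / 2| ^ α)⁻¹ := by
            refine mul_le_mul_of_nonneg_right ?_ (inv_nonneg.mpr hDpos.le)
            rw [one_le_div hBpos]; linarith
        _ = (1 + t ^ α) / ((1 + |y + t / 2| ^ α) * (1 + |y - t / 2| ^ α)) := by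
            field_simp
    have hint2 : IntervalIntegrable (fun y => (1 + |t/2 - y| ^ α)⁻¹) volume
        (t/2 - 1/2) (t/2) :=
      ((st12_cont α hα0.le).comp (continuous_const.sub continuous_id)).intervalIntegrable _ _
    have hmono := intervalIntegral.integral_mono_on hab1 hint2
      hfi.intervalIntegrable hle
    have hsub := intervalIntegral.integral_comp_sub_left
      (a := t/2 - 1/2) (b := t/2) (fun z => (1 + |z| ^ α)⁻¹) (t/2)
    rw [show t/2 - t/2 = (0:ℝ) from by ring, show t/2 - (t/2 - 1/2) = (1/2:ℝ) from by ring]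
      at hsub
    linarith [hmono, hsub.ge, hsub.le]
  -- second interval : [-t/2, -t/2 + 1/2]
  have hab2 : -(t/2) ≤ -(t/2) + 1/2 := by linarith
  have hlow2 : (∫ z in (0:ℝ)..(1/2), (1 + |z| ^ α)⁻¹)
      ≤ ∫ y in (-(t/2))..(-(t/2) + 1/2), f y := by
    have hle : ∀ y ∈ Set.Icc (-(t/2)) (-(t/2) + 1/2), (1 + |y + t/2| ^ α)⁻¹ ≤ f y := by
      intro y hy
      have hy1 := hy.1
      have hy2 := hy.2
      have hB : |y - t / 2| ≤ t := by
        rw [abs_of_nonpos (by linarith : y - t / 2 ≤ 0)]; linarith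
      have hBα : |y - t / 2| ^ α ≤ t ^ α :=
        Real.rpow_le_rpow (abs_nonneg _) hB hα0.le
      have hDpos : (0:ℝ) < 1 + |y + t / 2| ^ α := by
        have := Real.rpow_nonneg (abs_nonneg (y + t / 2)) α; linarith
      have hBpos : (0:ℝ) < 1 + |y - t / 2| ^ α := by
        have := Real.rpow_nonneg (abs_nonneg (y - t / 2)) α; linarith
      rw [hfdef]
      dsimp only
      calc (1 + |y + t / 2| ^ α)⁻¹
          = 1 * (1 + |y + t / 2| ^ α)⁻¹ := (one_mul _).symm
        _ ≤ ((1 + t ^ α) / (1 + |y - t / 2| ^ α)) * (1 + |y + t / 2| ^ α)⁻¹ := by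
            refine mul_le_mul_of_nonneg_right ?_ (inv_nonneg.mpr hDpos.le)
            rw [one_le_div hBpos]; linarith
        _ = (1 + t ^ α) / ((1 + |y + t / 2| ^ α) * (1 + |y - t / 2| ^ α)) := by
            field_simp
    have hint2 : IntervalIntegrable (fun y => (1 + |y + t/2| ^ α)⁻¹) volume
        (-(t/2)) (-(t/2) + 1/2) :=
      ((st12_cont α hα0.le).comp (continuous_id.add continuous_const)).intervalIntegrable _ _
    have hmono := intervalIntegral.integral_mono_on hab2 hint2
      hfi.intervalIntegrable hle
    have hsub := intervalIntegral.integral_comp_add_right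
      (a := -(t/2)) (b := -(t/2) + 1/2) (fun z => (1 + |z| ^ α)⁻¹) (t/2)
    rw [show -(t/2) + t/2 = (0:ℝ) from by ring, show -(t/2) + 1/2 + t/2 = (1/2:ℝ) from by ring]
      at hsub
    linarith [hmono, hsub.ge, hsub.le]
  -- combine
  refine ⟨?_, by linarith⟩
  rw [hrw]
  have hsplit : (∫ y in Set.Iic (0:ℝ), f y) + (∫ y in Set.Ioi (0:ℝ), f y) = ∫ y, f y := by
    have := MeasureTheory.integral_add_compl (measurableSet_Iic (a := (0:ℝ))) hfi
    simpa using this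
  have hnn : 0 ≤ᵐ[volume] f := Filter.Eventually.of_forall hf0
  have hmono1 : (∫ y in Set.Ioc (t/2 - 1/2) (t/2), f y) ≤ ∫ y in Set.Ioi (0:ℝ), f y := by
    refine MeasureTheory.setIntegral_mono_set hfi.integrableOn
      (MeasureTheory.ae_restrict_of_ae hnn) (HasSubset.Subset.eventuallyLE ?_)
    intro y hy
    exact lt_of_le_of_lt (by linarith : (0:ℝ) ≤ t/2 - 1/2) hy.1
  have hmono2 : (∫ y in Set.Ioc (-(t/2)) (-(t/2) + 1/2), f y) ≤ ∫ y in Set.Iic (0:ℝ), f y := by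
    refine MeasureTheory.setIntegral_mono_set hfi.integrableOn
      (MeasureTheory.ae_restrict_of_ae hnn) (HasSubset.Subset.eventuallyLE ?_)
    intro y hy
    exact le_trans hy.2 (by linarith)
  rw [intervalIntegral.integral_of_le hab1] at hlow1
  rw [intervalIntegral.integral_of_le hab2] at hlow2
  rw [hc_eq]
  linarith
end

section
/- For every β > 0 there exists a constant k > 0 such that the symmetric exponential-type density g_β satisfies (g_β * g_β)(x) ≥ k · g_β(x) for every x ∈ ℝ. -/
open Real MeasureTheory Set

/-!
On the block `y ∈ [0, 1]` the exponents satisfy `|y|^β + |x - y|^β ≤ |x|^β + 2` for `x ≥ 0`,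
because `|x - y| ≤ max x 1`. Hence the convolution of `exp (-|·|^β)` with itself dominates
`exp (-2) · exp (-|x|^β)`; the case `x < 0` follows by symmetry, and normalizing gives
`k = e⁻² / ∫ exp (-|z|^β)`.
-/

/-- The symmetric exponential-type probability density `g_β(y) = r_β e^{−|y|^β}` on `ℝ`,
where `r_β = (∫ e^{−|y|^β} dy)⁻¹` is the normalizing constant. -/
noncomputable def expType (β : ℝ) (y : ℝ) : ℝ :=
  (∫ z : ℝ, Real.exp (-|z| ^ β))⁻¹ * Real.exp (-|y| ^ β)

lemma integrable_exp_neg_abs_rpow {β : ℝ} (hβ : 0 < β) :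
    Integrable fun x : ℝ => exp (-|x| ^ β) := by
  have := (integrable_fun_norm_addHaar (volume : Measure ℝ) (f := fun y => exp (-y ^ β))).2 ?_
  · simpa [Real.norm_eq_abs] using this
  · simpa using integrableOn_rpow_mul_exp_neg_rpow (s := 0) (by norm_num) hβ

lemma rpow_add_abs_sub_rpow_le_add_two {β x y : ℝ} (hβ : 0 ≤ β) (hx : 0 ≤ x)
    (hy : y ∈ Icc (0 : ℝ) 1) : y ^ β + |x - y| ^ β ≤ x ^ β + 2 := by
  obtain ⟨hy0, hy1⟩ := hy
  have hyβ : y ^ β ≤ 1 := rpow_le_one hy0 hy1 hβ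
  have hxy : |x - y| ^ β ≤ x ^ β + 1 := by
    rcases le_total x 1 with hx1 | hx1
    · have : |x - y| ^ β ≤ 1 :=
        rpow_le_one (abs_nonneg _) (abs_le.2 ⟨by linarith, by linarith⟩) hβ
      linarith [rpow_nonneg hx β]
    · have : |x - y| ^ β ≤ x ^ β :=
        rpow_le_rpow (abs_nonneg _) (abs_le.2 ⟨by linarith, by linarith⟩) hβ
      linarith
  linarith

lemma Function.Even.integral_mul_neg_sub {f : ℝ → ℝ} (hf : f.Even) (x : ℝ) :
    ∫ y, f y * f (-x - y) = ∫ y, f y * f (x - y) := by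
  rw [← integral_neg_eq_self]
  congr 1 with y
  rw [hf, show -x - -y = -(x - y) by ring, hf]

lemma exp_neg_two_mul_le_integral_of_nonneg {β x : ℝ} (hβ : 0 < β) (hx : 0 ≤ x) :
    exp (-2) * exp (-|x| ^ β) ≤ ∫ y, exp (-|y| ^ β) * exp (-|x - y| ^ β) := by
  have hcont : Continuous fun y : ℝ => exp (-|x - y| ^ β) := by fun_prop (disch := positivity)
  have hint : Integrable fun y : ℝ => exp (-|y| ^ β) * exp (-|x - y| ^ β) :=
    (integrable_exp_neg_abs_rpow hβ).mul_bdd (c := 1) hcont.aestronglyMeasurable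
      (ae_of_all _ fun y => by
        rw [norm_of_nonneg (exp_pos _).le, exp_le_one_iff, neg_nonpos]; positivity)
  calc exp (-2) * exp (-|x| ^ β)
      = ∫ _ in Icc (0 : ℝ) 1, exp (-2) * exp (-|x| ^ β) := by simp
    _ ≤ ∫ y in Icc (0 : ℝ) 1, exp (-|y| ^ β) * exp (-|x - y| ^ β) := by
      refine setIntegral_mono_on (integrableOn_const measure_Icc_lt_top.ne) hint.integrableOn
        measurableSet_Icc fun y hy => ?_
      have := rpow_add_abs_sub_rpow_le_add_two hβ.le hx hy
      rw [← exp_add, ← exp_add, exp_le_exp, abs_of_nonneg hx, abs_of_nonneg hy.1]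
      linarith
    _ ≤ ∫ y, exp (-|y| ^ β) * exp (-|x - y| ^ β) :=
      setIntegral_le_integral hint (ae_of_all _ fun _ => by positivity)

lemma exp_neg_two_mul_le_integral {β : ℝ} (hβ : 0 < β) (x : ℝ) :
    exp (-2) * exp (-|x| ^ β) ≤ ∫ y, exp (-|y| ^ β) * exp (-|x - y| ^ β) := by
  rcases le_total 0 x with hx | hx
  · exact exp_neg_two_mul_le_integral_of_nonneg hβ hx
  · have even : (fun y : ℝ => exp (-|y| ^ β)).Even := fun y => by simp only [abs_neg]
    simpa [abs_neg, even.integral_mul_neg_sub x] using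
      exp_neg_two_mul_le_integral_of_nonneg hβ (neg_nonneg.2 hx)

/-- For every `β > 0` there is a constant `k > 0` with
`(g_β * g_β)(x) ≥ k · g_β(x)` for all `x ∈ ℝ`. -/
theorem statement_16 (β : ℝ) (hβ : 0 < β) :
    ∃ k : ℝ, 0 < k ∧ ∀ x : ℝ,
      k * expType β x ≤ ∫ y : ℝ, expType β y * expType β (x - y) := by
  set r := (∫ z : ℝ, exp (-|z| ^ β))⁻¹
  have hr : 0 < r := inv_pos.2 (integral_exp_pos (integrable_exp_neg_abs_rpow hβ))
  refine ⟨r * exp (-2), by positivity, fun x => ?_⟩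
  have hconv : ∫ y, expType β y * expType β (x - y)
      = r * r * ∫ y, exp (-|y| ^ β) * exp (-|x - y| ^ β) := by
    rw [← integral_const_mul]
    congr 1 with y
    simp only [expType, r]
    ring
  calc r * exp (-2) * expType β x = r * r * (exp (-2) * exp (-|x| ^ β)) := by
        simp only [expType, r]; ring
    _ ≤ _ := by rw [hconv]; gcongr; exact exp_neg_two_mul_le_integral hβ x
end
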